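/- Let n ≥ 7 be odd, and let O₃ = ((3,4,…,n),(1,2,3)) and O₄ = ((n-2,n-1,n),(1,2,…,n-2,n,n-1)). Then S⁻¹(T(S(O₃))) ≃ O₄, i.e. applying S, then T, then S⁻¹ to O₃ yields an origami simultaneously conjugate to O₄. -/
import Mathlib


open Equiv

/-- The permutation of `Fin n` given by 1-based cycle notation `(a1, ..., ak)`:
each listed square `a` (an element of `{1, ..., n}`) corresponds to `a - 1 : Fin n`,
and the cycle sends each listed element to the next one, the last back to the first. -/
def cyc (n : ℕ) (l : List ℕ) : Equiv.Perm (Fin n) :=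
  (l.filterMap fun a => if h : a - 1 < n then some (⟨a - 1, h⟩ : Fin n) else none).formPerm

/-- Equivalence of origami pairs by simultaneous conjugation. -/
def OrigamiEquiv {n : ℕ} (p q : Equiv.Perm (Fin n) × Equiv.Perm (Fin n)) : Prop :=
  ∃ g : Equiv.Perm (Fin n), g * p.1 * g⁻¹ = q.1 ∧ g * p.2 * g⁻¹ = q.2

/-- The action of `T`: `T(h,v) = (h, v h⁻¹)`. -/
def Tact {n : ℕ} (p : Equiv.Perm (Fin n) × Equiv.Perm (Fin n)) :
    Equiv.Perm (Fin n) × Equiv.Perm (Fin n) := (p.1, p.2 * p.1⁻¹)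

/-- The action of `T⁻¹`: `T⁻¹(h,v) = (h, v h)`. -/
def TinvAct {n : ℕ} (p : Equiv.Perm (Fin n) × Equiv.Perm (Fin n)) :
    Equiv.Perm (Fin n) × Equiv.Perm (Fin n) := (p.1, p.2 * p.1)

/-- The action of `S`: `S(h,v) = (h v⁻¹, v)`. -/
def Sact {n : ℕ} (p : Equiv.Perm (Fin n) × Equiv.Perm (Fin n)) :
    Equiv.Perm (Fin n) × Equiv.Perm (Fin n) := (p.1 * p.2⁻¹, p.2)

/-- The action of `S⁻¹`: `S⁻¹(h,v) = (h v, v)`. -/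
def SinvAct {n : ℕ} (p : Equiv.Perm (Fin n) × Equiv.Perm (Fin n)) :
    Equiv.Perm (Fin n) × Equiv.Perm (Fin n) := (p.1 * p.2, p.2)

/-- `O₃ = ((3,4,...,n), (1,2,3))` -/
def OB3 (n : ℕ) : Equiv.Perm (Fin n) × Equiv.Perm (Fin n) :=
  (cyc n (List.range' 3 (n - 2)), cyc n [1, 2, 3])

/-- `O₄ = ((n-2,n-1,n), (1,2,...,n-2,n,n-1))` -/
def OB4 (n : ℕ) : Equiv.Perm (Fin n) × Equiv.Perm (Fin n) :=
  (cyc n [n - 2, n - 1, n], cyc n (List.range' 1 (n - 2) ++ [n, n - 1]))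

lemma filterMap_range'_eq (n a k : ℕ) (h1 : 1 ≤ a) (h2 : a + k ≤ n + 1) :
    ((List.range' a k).filterMap
      fun b => if h : b - 1 < n then some (⟨b - 1, h⟩ : Fin n) else none)
    = List.ofFn (fun i : Fin k => ⟨a - 1 + i, by omega⟩) := by
  induction k generalizing a with
  | zero => simp
  | succ k ih =>
    rw [List.range'_succ,
      List.filterMap_cons_some (by rw [dif_pos (show a - 1 < n by omega)]),
      List.ofFn_succ, ih (a + 1) (by omega) (by omega)]
    congr 1
    exact congrArg List.ofFn (funext fun i => Fin.ext (by simp [Fin.val_succ]; omega))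

lemma formPerm_ofFn_apply {n m : ℕ} (φ : Fin m → Fin n) (hφ : Function.Injective φ)
    (i : ℕ) (hi : i < m) :
    (List.ofFn φ).formPerm (φ ⟨i, hi⟩) = φ ⟨(i + 1) % m, Nat.mod_lt _ (by omega)⟩ := by
  have h1 : (List.ofFn φ)[i]'(by simp [hi]) = φ ⟨i, hi⟩ := by simp
  rw [← h1, List.formPerm_apply_getElem _ (by rw [List.nodup_ofFn]; exact hφ)]
  simp

lemma formPerm_ofFn_notMem {n m : ℕ} (φ : Fin m → Fin n) (x : Fin n) (hx : ∀ i, φ i ≠ x) :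
    (List.ofFn φ).formPerm x = x :=
  List.formPerm_apply_of_notMem (by
    simp only [List.mem_ofFn, Set.mem_range]
    rintro ⟨i, rfl⟩
    exact hx i rfl)

lemma cyc_range'_apply (n a k : ℕ) (ha : 1 ≤ a) (hk : 1 ≤ k) (h2 : a + k ≤ n + 1) (x : Fin n) :
    cyc n (List.range' a k) x =
      if h : a - 1 ≤ x.val ∧ x.val < a - 1 + k then
        ⟨a - 1 + (x.val - (a - 1) + 1) % k, by
          have := Nat.mod_lt (x.val - (a - 1) + 1) (show 0 < k by omega); omega⟩
      else x := by
  unfold cyc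
  rw [filterMap_range'_eq n a k ha h2]
  have hφ : Function.Injective (fun i : Fin k => (⟨a - 1 + ↑i, by omega⟩ : Fin n)) := by
    intro i j hij
    simp only [Fin.mk.injEq] at hij
    exact Fin.ext (by omega)
  by_cases hx : a - 1 ≤ x.val ∧ x.val < a - 1 + k
  · rw [dif_pos hx]
    have key := formPerm_ofFn_apply (fun i : Fin k => (⟨a - 1 + ↑i, by omega⟩ : Fin n)) hφ
      (x.val - (a - 1)) (by omega)
    have hxeq : x = (⟨a - 1 + ↑(⟨x.val - (a - 1), by omega⟩ : Fin k), by omega⟩ : Fin n) :=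
      Fin.ext (by simp; omega)
    conv_lhs => rw [hxeq]
    rw [key]
  · rw [dif_neg hx]
    exact formPerm_ofFn_notMem _ x (fun i h => by
      have hi := i.isLt
      have h2 : a - 1 + (i : ℕ) = (x : ℕ) := congrArg Fin.val h
      exact hx ⟨by omega, by omega⟩)

lemma cycH_apply (n : ℕ) (hn : 7 ≤ n) (x : Fin n) :
    cyc n (List.range' 3 (n - 2)) x =
      if x.val < 2 then x
      else if _h2 : x.val = n - 1 then ⟨2, by omega⟩ else ⟨x.val + 1, by omega⟩ := by
  have hx := x.isLt
  rw [cyc_range'_apply n 3 (n - 2) (by omega) (by omega) (by omega)]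
  split_ifs with h1 h2 h3
  · exfalso; omega
  · apply Fin.ext
    have hm : (x.val - (3 - 1) + 1) % (n - 2) = 0 := by
      rw [show x.val - (3 - 1) + 1 = n - 2 by omega]
      exact Nat.mod_self _
    simp [hm]
    try omega
  · apply Fin.ext
    have hm : (x.val - (3 - 1) + 1) % (n - 2) = x.val - 1 := by
      rw [Nat.mod_eq_of_lt (by omega)]; omega
    simp [hm]
    try omega
  · rfl
  · exfalso; omega
  · exfalso; omega

lemma cycV_apply (n : ℕ) (hn : 7 ≤ n) (x : Fin n) :
    cyc n [1, 2, 3] x =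
      if x.val < 3 then ⟨(x.val + 1) % 3, by omega⟩ else x := by
  have hx := x.isLt
  rw [show ([1, 2, 3] : List ℕ) = List.range' 1 3 by simp [List.range'],
    cyc_range'_apply n 1 3 (by omega) (by omega) (by omega)]
  split_ifs with h1 h2 h3
  · exact Fin.ext (by simp; try omega)
  · exfalso; omega
  · exfalso; omega
  · rfl

lemma cycH'_apply (n : ℕ) (hn : 7 ≤ n) (x : Fin n) :
    cyc n [n - 2, n - 1, n] x =
      if n - 3 ≤ x.val then ⟨n - 3 + (x.val - (n - 3) + 1) % 3, by omega⟩ else x := by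
  have hx := x.isLt
  rw [show ([n - 2, n - 1, n] : List ℕ) = List.range' (n - 2) 3 by simp [List.range']; omega,
    cyc_range'_apply n (n - 2) 3 (by omega) (by omega) (by omega)]
  split_ifs with h1 h2 h3
  · exact Fin.ext (by simp; try omega)
  · exfalso; omega
  · exfalso; omega
  · rfl

def psiF (n : ℕ) : Fin n → Fin n := fun j =>
  if j.val < n - 2 then j
  else if j.val = n - 2 then ⟨n - 1, by have := j.isLt; omega⟩
  else ⟨n - 2, by have := j.isLt; omega⟩

lemma psiF_val (n : ℕ) (j : Fin n) : (psiF n j).val =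
    if j.val < n - 2 then j.val else if j.val = n - 2 then n - 1 else n - 2 := by
  unfold psiF
  split_ifs <;> rfl

lemma psiF_inj (n : ℕ) : Function.Injective (psiF n) := by
  intro i j hij
  have hi := i.isLt; have hj := j.isLt
  have h := congrArg Fin.val hij
  rw [psiF_val, psiF_val] at h
  apply Fin.ext
  split_ifs at h <;> omega

lemma ofFn_psiF (n : ℕ) (hn : 7 ≤ n) :
    (List.ofFn fun i : Fin (n - 2) => (⟨1 - 1 + ↑i, by omega⟩ : Fin n)) ++
      [⟨n - 1, by omega⟩, ⟨n - 2, by omega⟩] = List.ofFn (psiF n) := by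
  apply List.ext_getElem (by simp; omega)
  intro i hi1 hi2
  rw [List.length_ofFn] at hi2
  by_cases hcase : i < n - 2
  · rw [List.getElem_append_left (by simpa using hcase)]
    simp only [List.getElem_ofFn]
    apply Fin.ext
    rw [psiF_val]
    simp [hcase]
  · rw [List.getElem_append_right (by simpa using hcase)]
    apply Fin.ext
    simp only [List.getElem_ofFn]
    rw [psiF_val]
    by_cases hc2 : i = n - 2
    · simp [show i - (n - 2) = 0 from by omega, hcase, hc2]
    · simp [show i - (n - 2) = 1 from by omega, hcase, hc2]

lemma cycV'_val (n : ℕ) (hn : 7 ≤ n) (x : Fin n) :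
    (cyc n (List.range' 1 (n - 2) ++ [n, n - 1]) x).val =
      if x.val < n - 3 then x.val + 1
      else if x.val = n - 3 then n - 1
      else if x.val = n - 2 then 0
      else n - 2 := by
  have hx := x.isLt
  have h2list : (([n, n - 1] : List ℕ).filterMap
      fun a => if h : a - 1 < n then some (⟨a - 1, h⟩ : Fin n) else none)
      = [⟨n - 1, by omega⟩, ⟨n - 2, by omega⟩] := by
    rw [List.filterMap_cons_some (by rw [dif_pos (show n - 1 < n by omega)]),
      List.filterMap_cons_some (by rw [dif_pos (show n - 1 - 1 < n by omega)]),
      List.filterMap_nil]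
    simp [Fin.ext_iff]
    omega
  unfold cyc
  rw [List.filterMap_append, filterMap_range'_eq n 1 (n - 2) (by omega) (by omega), h2list,
    ofFn_psiF n hn]
  by_cases hc1 : x.val < n - 2
  · have key := formPerm_ofFn_apply (psiF n) (psiF_inj n) x.val (by omega)
    have e1 : psiF n ⟨x.val, by omega⟩ = x := by
      apply Fin.ext
      rw [psiF_val]
      simp only [Fin.val_mk]
      rw [if_pos hc1]
    conv_lhs => rw [← e1, key]
    rw [psiF_val]
    simp only [Fin.val_mk]
    have hm : (x.val + 1) % n = x.val + 1 := Nat.mod_eq_of_lt (by omega)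
    split_ifs <;> omega
  · by_cases hc2 : x.val = n - 1
    · have key := formPerm_ofFn_apply (psiF n) (psiF_inj n) (n - 2) (by omega)
      have e1 : psiF n ⟨n - 2, by omega⟩ = x := by
        apply Fin.ext
        rw [psiF_val]
        simp only [Fin.val_mk]
        split_ifs <;> omega
      conv_lhs => rw [← e1, key]
      rw [psiF_val]
      simp only [Fin.val_mk]
      have hm : (n - 2 + 1) % n = n - 1 := by rw [Nat.mod_eq_of_lt (by omega)]; omega
      split_ifs <;> omega
    · have key := formPerm_ofFn_apply (psiF n) (psiF_inj n) (n - 1) (by omega)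
      have e1 : psiF n ⟨n - 1, by omega⟩ = x := by
        apply Fin.ext
        rw [psiF_val]
        simp only [Fin.val_mk]
        split_ifs <;> omega
      conv_lhs => rw [← e1, key]
      rw [psiF_val]
      simp only [Fin.val_mk]
      have hm : (n - 1 + 1) % n = 0 := by rw [show n - 1 + 1 = n from by omega]; exact Nat.mod_self n
      split_ifs <;> omega

lemma cycH_val (n : ℕ) (hn : 7 ≤ n) (x : Fin n) :
    (cyc n (List.range' 3 (n - 2)) x).val =
      if x.val < 2 then x.val else if x.val = n - 1 then 2 else x.val + 1 := by
  rw [cycH_apply n hn x]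
  split_ifs <;> rfl

lemma cycV_val (n : ℕ) (hn : 7 ≤ n) (x : Fin n) :
    (cyc n [1, 2, 3] x).val =
      if x.val < 3 then (x.val + 1) % 3 else x.val := by
  rw [cycV_apply n hn x]
  split_ifs <;> rfl

lemma cycH'_val (n : ℕ) (hn : 7 ≤ n) (x : Fin n) :
    (cyc n [n - 2, n - 1, n] x).val =
      if n - 3 ≤ x.val then n - 3 + (x.val - (n - 3) + 1) % 3 else x.val := by
  rw [cycH'_apply n hn x]
  split_ifs <;> rfl

def gfun (n : ℕ) : Fin n → Fin n := fun x =>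
  if _h0 : x.val = 0 then ⟨n - 2, by have := x.isLt; omega⟩
  else if _h1 : x.val = 1 then ⟨n - 1, by have := x.isLt; omega⟩
  else if _h2 : x.val = 2 then ⟨0, by have := x.isLt; omega⟩
  else ⟨n - x.val, by have := x.isLt; omega⟩

lemma gfun_val (n : ℕ) (x : Fin n) : (gfun n x).val =
    if x.val = 0 then n - 2 else if x.val = 1 then n - 1
    else if x.val = 2 then 0 else n - x.val := by
  unfold gfun; split_ifs <;> rfl

lemma gfun_inj (n : ℕ) (hn : 7 ≤ n) : Function.Injective (gfun n) := by
  intro a b hab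
  have ha := a.isLt; have hb := b.isLt
  have hv := congrArg Fin.val hab
  rw [gfun_val, gfun_val] at hv
  apply Fin.ext
  split_ifs at hv <;> omega

set_option maxHeartbeats 1000000 in
theorem stmt18 (n : ℕ) (hn : 7 ≤ n) (hno : Odd n) :
    OrigamiEquiv (SinvAct (Tact (Sact (OB3 n)))) (OB4 n) := by
  let g : Equiv.Perm (Fin n) :=
    Equiv.ofBijective (gfun n) (Finite.injective_iff_bijective.mp (gfun_inj n hn))
  have gapp : ∀ x : Fin n, ((g : Equiv.Perm (Fin n)) x).val =
      if x.val = 0 then n - 2 else if x.val = 1 then n - 1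
      else if x.val = 2 then 0 else n - x.val := fun x => gfun_val n x
  have key1 : g * (cyc n (List.range' 3 (n - 2))) * (cyc n [1, 2, 3]) = (cyc n [n - 2, n - 1, n]) * (g * (cyc n (List.range' 3 (n - 2)))) := by
    ext x
    have hx := x.isLt
    simp only [Equiv.Perm.mul_apply]
    by_cases hi0 : (x.val:ℕ) = 0
    · have e1 : ((cyc n [1, 2, 3]) x).val = 1 := by
        rw [cycV_val n hn]; split_ifs <;> first | exact absurd rfl ‹¬_› | exact False.elim ‹False› | omega
      have e2 : ((cyc n (List.range' 3 (n - 2))) ((cyc n [1, 2, 3]) x)).val = 1 := by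
        rw [cycH_val n hn, e1]; split_ifs <;> first | exact absurd rfl ‹¬_› | exact False.elim ‹False› | omega
      have e3 : ((g : Equiv.Perm (Fin n)) ((cyc n (List.range' 3 (n - 2))) ((cyc n [1, 2, 3]) x))).val = n - 1 := by
        rw [gapp, e2]; split_ifs <;> first | exact absurd rfl ‹¬_› | exact False.elim ‹False› | omega
      have f1 : ((cyc n (List.range' 3 (n - 2))) x).val = 0 := by
        rw [cycH_val n hn]; split_ifs <;> first | exact absurd rfl ‹¬_› | exact False.elim ‹False› | omega
      have f2 : ((g : Equiv.Perm (Fin n)) ((cyc n (List.range' 3 (n - 2))) x)).val = n - 2 := by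
        rw [gapp, f1]; split_ifs <;> first | exact absurd rfl ‹¬_› | exact False.elim ‹False› | omega
      have f3 : ((cyc n [n - 2, n - 1, n]) ((g : Equiv.Perm (Fin n)) ((cyc n (List.range' 3 (n - 2))) x))).val = n - 1 := by
        rw [cycH'_val n hn, f2]; split_ifs <;> first | exact absurd rfl ‹¬_› | exact False.elim ‹False› | omega
      rw [e3, f3]
    · by_cases hi1 : (x.val:ℕ) = 1
      · have e1 : ((cyc n [1, 2, 3]) x).val = 2 := by
          rw [cycV_val n hn]; split_ifs <;> first | exact absurd rfl ‹¬_› | exact False.elim ‹False› | omega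
        have e2 : ((cyc n (List.range' 3 (n - 2))) ((cyc n [1, 2, 3]) x)).val = 3 := by
          rw [cycH_val n hn, e1]; split_ifs <;> first | exact absurd rfl ‹¬_› | exact False.elim ‹False› | omega
        have e3 : ((g : Equiv.Perm (Fin n)) ((cyc n (List.range' 3 (n - 2))) ((cyc n [1, 2, 3]) x))).val = n - 3 := by
          rw [gapp, e2]; split_ifs <;> first | exact absurd rfl ‹¬_› | exact False.elim ‹False› | omega
        have f1 : ((cyc n (List.range' 3 (n - 2))) x).val = 1 := by
          rw [cycH_val n hn]; split_ifs <;> first | exact absurd rfl ‹¬_› | exact False.elim ‹False› | omega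
        have f2 : ((g : Equiv.Perm (Fin n)) ((cyc n (List.range' 3 (n - 2))) x)).val = n - 1 := by
          rw [gapp, f1]; split_ifs <;> first | exact absurd rfl ‹¬_› | exact False.elim ‹False› | omega
        have f3 : ((cyc n [n - 2, n - 1, n]) ((g : Equiv.Perm (Fin n)) ((cyc n (List.range' 3 (n - 2))) x))).val = n - 3 := by
          rw [cycH'_val n hn, f2]; split_ifs <;> first | exact absurd rfl ‹¬_› | exact False.elim ‹False› | omega
        rw [e3, f3]
      · by_cases hi2 : (x.val:ℕ) = 2
        · have e1 : ((cyc n [1, 2, 3]) x).val = 0 := by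
            rw [cycV_val n hn]; split_ifs <;> first | exact absurd rfl ‹¬_› | exact False.elim ‹False› | omega
          have e2 : ((cyc n (List.range' 3 (n - 2))) ((cyc n [1, 2, 3]) x)).val = 0 := by
            rw [cycH_val n hn, e1]; split_ifs <;> first | exact absurd rfl ‹¬_› | exact False.elim ‹False› | omega
          have e3 : ((g : Equiv.Perm (Fin n)) ((cyc n (List.range' 3 (n - 2))) ((cyc n [1, 2, 3]) x))).val = n - 2 := by
            rw [gapp, e2]; split_ifs <;> first | exact absurd rfl ‹¬_› | exact False.elim ‹False› | omega
          have f1 : ((cyc n (List.range' 3 (n - 2))) x).val = 3 := by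
            rw [cycH_val n hn]; split_ifs <;> first | exact absurd rfl ‹¬_› | exact False.elim ‹False› | omega
          have f2 : ((g : Equiv.Perm (Fin n)) ((cyc n (List.range' 3 (n - 2))) x)).val = n - 3 := by
            rw [gapp, f1]; split_ifs <;> first | exact absurd rfl ‹¬_› | exact False.elim ‹False› | omega
          have f3 : ((cyc n [n - 2, n - 1, n]) ((g : Equiv.Perm (Fin n)) ((cyc n (List.range' 3 (n - 2))) x))).val = n - 2 := by
            rw [cycH'_val n hn, f2]; split_ifs <;> first | exact absurd rfl ‹¬_› | exact False.elim ‹False› | omega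
          rw [e3, f3]
        · by_cases hin : (x.val:ℕ) = n - 1
          · have e1 : ((cyc n [1, 2, 3]) x).val = n - 1 := by
              rw [cycV_val n hn]; split_ifs <;> first | exact absurd rfl ‹¬_› | exact False.elim ‹False› | omega
            have e2 : ((cyc n (List.range' 3 (n - 2))) ((cyc n [1, 2, 3]) x)).val = 2 := by
              rw [cycH_val n hn, e1]; split_ifs <;> first | exact absurd rfl ‹¬_› | exact False.elim ‹False› | omega
            have e3 : ((g : Equiv.Perm (Fin n)) ((cyc n (List.range' 3 (n - 2))) ((cyc n [1, 2, 3]) x))).val = 0 := by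
              rw [gapp, e2]; split_ifs <;> first | exact absurd rfl ‹¬_› | exact False.elim ‹False› | omega
            have f1 : ((cyc n (List.range' 3 (n - 2))) x).val = 2 := by
              rw [cycH_val n hn]; split_ifs <;> first | exact absurd rfl ‹¬_› | exact False.elim ‹False› | omega
            have f2 : ((g : Equiv.Perm (Fin n)) ((cyc n (List.range' 3 (n - 2))) x)).val = 0 := by
              rw [gapp, f1]; split_ifs <;> first | exact absurd rfl ‹¬_› | exact False.elim ‹False› | omega
            have f3 : ((cyc n [n - 2, n - 1, n]) ((g : Equiv.Perm (Fin n)) ((cyc n (List.range' 3 (n - 2))) x))).val = 0 := by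
              rw [cycH'_val n hn, f2]; split_ifs <;> first | exact absurd rfl ‹¬_› | exact False.elim ‹False› | omega
            rw [e3, f3]
          · have e1 : ((cyc n [1, 2, 3]) x).val = x.val := by
              rw [cycV_val n hn]; split_ifs <;> first | exact absurd rfl ‹¬_› | exact False.elim ‹False› | omega
            have e2 : ((cyc n (List.range' 3 (n - 2))) ((cyc n [1, 2, 3]) x)).val = x.val + 1 := by
              rw [cycH_val n hn, e1]; split_ifs <;> first | exact absurd rfl ‹¬_› | exact False.elim ‹False› | omega
            have e3 : ((g : Equiv.Perm (Fin n)) ((cyc n (List.range' 3 (n - 2))) ((cyc n [1, 2, 3]) x))).val = n - (x.val + 1) := by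
              rw [gapp, e2]; split_ifs <;> first | exact absurd rfl ‹¬_› | exact False.elim ‹False› | omega
            have f1 : ((cyc n (List.range' 3 (n - 2))) x).val = x.val + 1 := by
              rw [cycH_val n hn]; split_ifs <;> first | exact absurd rfl ‹¬_› | exact False.elim ‹False› | omega
            have f2 : ((g : Equiv.Perm (Fin n)) ((cyc n (List.range' 3 (n - 2))) x)).val = n - (x.val + 1) := by
              rw [gapp, f1]; split_ifs <;> first | exact absurd rfl ‹¬_› | exact False.elim ‹False› | omega
            have f3 : ((cyc n [n - 2, n - 1, n]) ((g : Equiv.Perm (Fin n)) ((cyc n (List.range' 3 (n - 2))) x))).val = n - (x.val + 1) := by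
              rw [cycH'_val n hn, f2]; split_ifs <;> first | exact absurd rfl ‹¬_› | exact False.elim ‹False› | omega
            rw [e3, f3]
  have key2 : g * ((cyc n [1, 2, 3]) * (cyc n [1, 2, 3])) = (cyc n (List.range' 1 (n - 2) ++ [n, n - 1])) * (g * (cyc n (List.range' 3 (n - 2)))) := by
    ext x
    have hx := x.isLt
    simp only [Equiv.Perm.mul_apply]
    by_cases hi0 : (x.val:ℕ) = 0
    · have e1 : ((cyc n [1, 2, 3]) x).val = (if (x.val:ℕ) < 3 then (x.val + 1) % 3 else x.val : ℕ) := cycV_val n hn x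
      have e2 : ((cyc n [1, 2, 3]) ((cyc n [1, 2, 3]) x)).val = 2 := by
        rw [cycV_val n hn, e1]; split_ifs <;> first | exact absurd rfl ‹¬_› | exact False.elim ‹False› | omega
      have e3 : ((g : Equiv.Perm (Fin n)) ((cyc n [1, 2, 3]) ((cyc n [1, 2, 3]) x))).val = 0 := by
        rw [gapp, e2]; split_ifs <;> first | exact absurd rfl ‹¬_› | exact False.elim ‹False› | omega
      have f1 : ((cyc n (List.range' 3 (n - 2))) x).val = 0 := by
        rw [cycH_val n hn]; split_ifs <;> first | exact absurd rfl ‹¬_› | exact False.elim ‹False› | omega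
      have f2 : ((g : Equiv.Perm (Fin n)) ((cyc n (List.range' 3 (n - 2))) x)).val = n - 2 := by
        rw [gapp, f1]; split_ifs <;> first | exact absurd rfl ‹¬_› | exact False.elim ‹False› | omega
      have f3 : ((cyc n (List.range' 1 (n - 2) ++ [n, n - 1])) ((g : Equiv.Perm (Fin n)) ((cyc n (List.range' 3 (n - 2))) x))).val = 0 := by
        rw [cycV'_val n hn, f2]; split_ifs <;> first | exact absurd rfl ‹¬_› | exact False.elim ‹False› | omega
      rw [e3, f3]
    · by_cases hi1 : (x.val:ℕ) = 1
      · have e1 : ((cyc n [1, 2, 3]) x).val = (if (x.val:ℕ) < 3 then (x.val + 1) % 3 else x.val : ℕ) := cycV_val n hn x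
        have e2 : ((cyc n [1, 2, 3]) ((cyc n [1, 2, 3]) x)).val = 0 := by
          rw [cycV_val n hn, e1]; split_ifs <;> first | exact absurd rfl ‹¬_› | exact False.elim ‹False› | omega
        have e3 : ((g : Equiv.Perm (Fin n)) ((cyc n [1, 2, 3]) ((cyc n [1, 2, 3]) x))).val = n - 2 := by
          rw [gapp, e2]; split_ifs <;> first | exact absurd rfl ‹¬_› | exact False.elim ‹False› | omega
        have f1 : ((cyc n (List.range' 3 (n - 2))) x).val = 1 := by
          rw [cycH_val n hn]; split_ifs <;> first | exact absurd rfl ‹¬_› | exact False.elim ‹False› | omega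
        have f2 : ((g : Equiv.Perm (Fin n)) ((cyc n (List.range' 3 (n - 2))) x)).val = n - 1 := by
          rw [gapp, f1]; split_ifs <;> first | exact absurd rfl ‹¬_› | exact False.elim ‹False› | omega
        have f3 : ((cyc n (List.range' 1 (n - 2) ++ [n, n - 1])) ((g : Equiv.Perm (Fin n)) ((cyc n (List.range' 3 (n - 2))) x))).val = n - 2 := by
          rw [cycV'_val n hn, f2]; split_ifs <;> first | exact absurd rfl ‹¬_› | exact False.elim ‹False› | omega
        rw [e3, f3]
      · by_cases hi2 : (x.val:ℕ) = 2
        · have e1 : ((cyc n [1, 2, 3]) x).val = (if (x.val:ℕ) < 3 then (x.val + 1) % 3 else x.val : ℕ) := cycV_val n hn x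
          have e2 : ((cyc n [1, 2, 3]) ((cyc n [1, 2, 3]) x)).val = 1 := by
            rw [cycV_val n hn, e1]; split_ifs <;> first | exact absurd rfl ‹¬_› | exact False.elim ‹False› | omega
          have e3 : ((g : Equiv.Perm (Fin n)) ((cyc n [1, 2, 3]) ((cyc n [1, 2, 3]) x))).val = n - 1 := by
            rw [gapp, e2]; split_ifs <;> first | exact absurd rfl ‹¬_› | exact False.elim ‹False› | omega
          have f1 : ((cyc n (List.range' 3 (n - 2))) x).val = 3 := by
            rw [cycH_val n hn]; split_ifs <;> first | exact absurd rfl ‹¬_› | exact False.elim ‹False› | omega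
          have f2 : ((g : Equiv.Perm (Fin n)) ((cyc n (List.range' 3 (n - 2))) x)).val = n - 3 := by
            rw [gapp, f1]; split_ifs <;> first | exact absurd rfl ‹¬_› | exact False.elim ‹False› | omega
          have f3 : ((cyc n (List.range' 1 (n - 2) ++ [n, n - 1])) ((g : Equiv.Perm (Fin n)) ((cyc n (List.range' 3 (n - 2))) x))).val = n - 1 := by
            rw [cycV'_val n hn, f2]; split_ifs <;> first | exact absurd rfl ‹¬_› | exact False.elim ‹False› | omega
          rw [e3, f3]
        · by_cases hin : (x.val:ℕ) = n - 1
          · have e1 : ((cyc n [1, 2, 3]) x).val = (if (x.val:ℕ) < 3 then (x.val + 1) % 3 else x.val : ℕ) := cycV_val n hn x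
            have e2 : ((cyc n [1, 2, 3]) ((cyc n [1, 2, 3]) x)).val = n - 1 := by
              rw [cycV_val n hn, e1]; split_ifs <;> first | exact absurd rfl ‹¬_› | exact False.elim ‹False› | omega
            have e3 : ((g : Equiv.Perm (Fin n)) ((cyc n [1, 2, 3]) ((cyc n [1, 2, 3]) x))).val = 1 := by
              rw [gapp, e2]; split_ifs <;> first | exact absurd rfl ‹¬_› | exact False.elim ‹False› | omega
            have f1 : ((cyc n (List.range' 3 (n - 2))) x).val = 2 := by
              rw [cycH_val n hn]; split_ifs <;> first | exact absurd rfl ‹¬_› | exact False.elim ‹False› | omega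
            have f2 : ((g : Equiv.Perm (Fin n)) ((cyc n (List.range' 3 (n - 2))) x)).val = 0 := by
              rw [gapp, f1]; split_ifs <;> first | exact absurd rfl ‹¬_› | exact False.elim ‹False› | omega
            have f3 : ((cyc n (List.range' 1 (n - 2) ++ [n, n - 1])) ((g : Equiv.Perm (Fin n)) ((cyc n (List.range' 3 (n - 2))) x))).val = 1 := by
              rw [cycV'_val n hn, f2]; split_ifs <;> first | exact absurd rfl ‹¬_› | exact False.elim ‹False› | omega
            rw [e3, f3]
          · have e1 : ((cyc n [1, 2, 3]) x).val = (if (x.val:ℕ) < 3 then (x.val + 1) % 3 else x.val : ℕ) := cycV_val n hn x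
            have e2 : ((cyc n [1, 2, 3]) ((cyc n [1, 2, 3]) x)).val = x.val := by
              rw [cycV_val n hn, e1]; split_ifs <;> first | exact absurd rfl ‹¬_› | exact False.elim ‹False› | omega
            have e3 : ((g : Equiv.Perm (Fin n)) ((cyc n [1, 2, 3]) ((cyc n [1, 2, 3]) x))).val = n - x.val := by
              rw [gapp, e2]; split_ifs <;> first | exact absurd rfl ‹¬_› | exact False.elim ‹False› | omega
            have f1 : ((cyc n (List.range' 3 (n - 2))) x).val = x.val + 1 := by
              rw [cycH_val n hn]; split_ifs <;> first | exact absurd rfl ‹¬_› | exact False.elim ‹False› | omega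
            have f2 : ((g : Equiv.Perm (Fin n)) ((cyc n (List.range' 3 (n - 2))) x)).val = n - (x.val + 1) := by
              rw [gapp, f1]; split_ifs <;> first | exact absurd rfl ‹¬_› | exact False.elim ‹False› | omega
            have f3 : ((cyc n (List.range' 1 (n - 2) ++ [n, n - 1])) ((g : Equiv.Perm (Fin n)) ((cyc n (List.range' 3 (n - 2))) x))).val = n - x.val := by
              rw [cycV'_val n hn, f2]; split_ifs <;> first | exact absurd rfl ‹¬_› | exact False.elim ‹False› | omega
            rw [e3, f3]
  refine ⟨g, ?_, ?_⟩
  · show g * (((cyc n (List.range' 3 (n - 2))) * (cyc n [1, 2, 3])⁻¹) * ((cyc n [1, 2, 3]) * ((cyc n (List.range' 3 (n - 2))) * (cyc n [1, 2, 3])⁻¹)⁻¹)) * g⁻¹ = (cyc n [n - 2, n - 1, n])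
    have e : g * (((cyc n (List.range' 3 (n - 2))) * (cyc n [1, 2, 3])⁻¹) * ((cyc n [1, 2, 3]) * ((cyc n (List.range' 3 (n - 2))) * (cyc n [1, 2, 3])⁻¹)⁻¹)) * g⁻¹
        = (g * (cyc n (List.range' 3 (n - 2))) * (cyc n [1, 2, 3])) * (g * (cyc n (List.range' 3 (n - 2))))⁻¹ := by group
    rw [e, key1]
    group
  · show g * ((cyc n [1, 2, 3]) * ((cyc n (List.range' 3 (n - 2))) * (cyc n [1, 2, 3])⁻¹)⁻¹) * g⁻¹ = (cyc n (List.range' 1 (n - 2) ++ [n, n - 1]))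
    have e : g * ((cyc n [1, 2, 3]) * ((cyc n (List.range' 3 (n - 2))) * (cyc n [1, 2, 3])⁻¹)⁻¹) * g⁻¹
        = (g * ((cyc n [1, 2, 3]) * (cyc n [1, 2, 3]))) * (g * (cyc n (List.range' 3 (n - 2))))⁻¹ := by group
    rw [e, key2]
    group
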